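/- arXiv:2102.08325 — 2 statements merged into one kernel-verified Lean document; each statement's English description precedes it below -/
import Mathlib

section
/- Consider a round-structured DAG where every vertex in round r ≥ 2 has strong edges to at least 2f+1 of the at most 3f+1 vertices in round r−1, where no two vertices in the same round have the same source. If a vertex v in round r₀ has at least 2f+1 vertices in round r₁ > r₀ with strong paths to v, then every vertex in any round r₂ > r₁ has a strong path to v. -/
/-!
Two sets of at least `2f+1` vertices inside a round of at most `3f+1` vertices intersect, so the
`2f+1` strong edges of a vertex in round `r₁ + 1` hit `U`. In every later round, a strong edge to
any vertex of the previous round extends that vertex's path to `v`.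
-/

open Finset

theorem Finset.inter_nonempty_of_two_mul_add_one_le_card {V : Type*} [DecidableEq V]
    {S A B : Finset V} {f : ℕ}
    (hS : #S ≤ 3 * f + 1) (hAS : A ⊆ S) (hBS : B ⊆ S) (hA : 2 * f + 1 ≤ #A)
    (hB : 2 * f + 1 ≤ #B) : (A ∩ B).Nonempty :=
  inter_nonempty_of_card_lt_card_add_card hAS hBS (by omega)

theorem commit_path_general {V : Type} (f : ℕ) (Vtx : ℕ → Finset V) (SE : V → V → Prop)
    (N : V → Finset V)
    (hsize : ∀ r, (Vtx r).card ≤ 3 * f + 1)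
    (hN : ∀ r u, u ∈ Vtx (r + 1) →
        N u ⊆ Vtx r ∧ 2 * f + 1 ≤ (N u).card ∧ ∀ x ∈ N u, SE u x)
    (v : V) (r₁ : ℕ)
    (U : Finset V) (hU : U ⊆ Vtx r₁) (hUcard : 2 * f + 1 ≤ U.card)
    (hUpath : ∀ u ∈ U, Relation.ReflTransGen SE u v) :
    ∀ r₂, r₁ < r₂ → ∀ w ∈ Vtx r₂, Relation.ReflTransGen SE w v := by
  classical
  intro r₂ hr₂
  induction r₂, hr₂ using Nat.le_induction with
  | base =>
    intro w hw
    obtain ⟨hNsub, hNcard, hedge⟩ := hN r₁ w hw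
    obtain ⟨x, hx⟩ :=
      inter_nonempty_of_two_mul_add_one_le_card (hsize r₁) hNsub hU hNcard hUcard
    exact .head (hedge x (mem_inter.mp hx).1) (hUpath x (mem_inter.mp hx).2)
  | succ r _ ih =>
    intro w hw
    obtain ⟨hNsub, hNcard, hedge⟩ := hN r w hw
    obtain ⟨x, hx⟩ : (N w).Nonempty := card_pos.mp (by omega)
    exact .head (hedge x hx) (ih x (hNsub hx))

theorem commit_path {V : Type} (f : ℕ) (Vtx : ℕ → Finset V) (SE : V → V → Prop)
    (N : V → Finset V)
    (hsize : ∀ r, (Vtx r).card ≤ 3 * f + 1)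
    (hN : ∀ r u, u ∈ Vtx (r + 1) →
        N u ⊆ Vtx r ∧ 2 * f + 1 ≤ (N u).card ∧ ∀ x ∈ N u, SE u x)
    (v : V) (r₀ r₁ : ℕ) (hv : v ∈ Vtx r₀) (hr : r₀ < r₁)
    (U : Finset V) (hU : U ⊆ Vtx r₁) (hUcard : 2 * f + 1 ≤ U.card)
    (hUpath : ∀ u ∈ U, Relation.ReflTransGen SE u v) :
    ∀ r₂, r₁ < r₂ → ∀ w ∈ Vtx r₂, Relation.ReflTransGen SE w v :=
  commit_path_general f Vtx SE N hsize hN v r₁ U hU hUcard hUpath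
end

section
/- Suppose leaders are committed at increasing wave numbers, and whenever a process commits the leader of wave w it first commits (in wave order) all leaders of waves w' with previousDecided < w' < w for which a strong path exists from the wave-w leader. If the strong-path condition guaranteeing that any committed leader is reachable from all later leaders holds, then any two processes commit the same sequence of leaders, i.e., the committed leader sequence of one process is a prefix of the other's. -/
/-- The sequence of leaders committed when directly committing at a wave with
leader `v`, walking back through earlier waves, in increasing wave order. -/
def seqFrom {V : Type} (leader : ℕ → Option V) (reach : V → V → Prop)
    [DecidableRel reach] : ℕ → V → List V
  | 0, v => [v]
  | (k + 1), v =>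
      match leader k with
      | some u =>
          if reach v u then seqFrom leader reach k u ++ [v]
          else seqFrom leader reach k v
      | none => seqFrom leader reach k v

/-- Since every leader after `w₀` reaches `v₀`, the walk back only moves between vertices
reaching `v₀`, and so picks up `v₀` on arriving at wave `w₀`. -/
theorem seqFrom_prefix_of_reach {V : Type} {leader : ℕ → Option V} {reach : V → V → Prop}
    [DecidableRel reach] {w₀ : ℕ} {v₀ : V} (hl₀ : leader w₀ = some v₀)
    (hlater : ∀ w > w₀, ∀ u, leader w = some u → reach u v₀) {w : ℕ} (hw : w₀ < w) :
    ∀ v, reach v v₀ → seqFrom leader reach w₀ v₀ <+: seqFrom leader reach w v := by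
  induction w, hw using Nat.le_induction with
  | base =>
    intro v hv
    simp only [seqFrom, hl₀, if_pos hv]
    exact List.prefix_append _ _
  | succ k hk ih =>
    intro v hv
    rw [seqFrom]
    cases hlk : leader k with
    | none => exact ih v hv
    | some u =>
      by_cases hvu : reach v u
      · simp only [if_pos hvu]
        exact (ih u (hlater k hk u hlk)).trans (List.prefix_append _ _)
      · simp only [if_neg hvu]
        exact ih v hv

theorem committed_sequences_consistent_general {V : Type}
    (leader : ℕ → Option V) (reach : V → V → Prop) [DecidableRel reach]
    (D₁ D₂ : Set ℕ)
    (hkey : ∀ w ∈ D₁ ∪ D₂, ∀ v, leader w = some v →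
        ∀ w'' > w, ∀ u, leader w'' = some u → reach u v)
    (w₁ w₂ : ℕ) (v₁ v₂ : V) (h₁ : w₁ ∈ D₁)
    (hl₁ : leader w₁ = some v₁) (hl₂ : leader w₂ = some v₂) (hle : w₁ ≤ w₂) :
    (seqFrom leader reach w₁ v₁) <+: (seqFrom leader reach w₂ v₂) := by
  have hlater := hkey w₁ (Or.inl h₁) v₁ hl₁
  rcases hle.eq_or_lt with rfl | hlt
  · obtain rfl : v₁ = v₂ := Option.some_inj.mp (hl₁.symm.trans hl₂)
    exact List.prefix_refl _
  · exact seqFrom_prefix_of_reach hl₁ hlater hlt v₂ (hlater w₂ hlt v₂ hl₂)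

theorem committed_sequences_consistent {V : Type}
    (leader : ℕ → Option V) (reach : V → V → Prop) [DecidableRel reach]
    (D₁ D₂ : Set ℕ)
    (hkey : ∀ w ∈ D₁ ∪ D₂, ∀ v, leader w = some v →
        ∀ w'' > w, ∀ u, leader w'' = some u → reach u v)
    (w₁ w₂ : ℕ) (v₁ v₂ : V) (h₁ : w₁ ∈ D₁) (h₂ : w₂ ∈ D₂)
    (hl₁ : leader w₁ = some v₁) (hl₂ : leader w₂ = some v₂) (hle : w₁ ≤ w₂) :
    (seqFrom leader reach w₁ v₁) <+: (seqFrom leader reach w₂ v₂) :=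
  committed_sequences_consistent_general leader reach D₁ D₂ hkey w₁ w₂ v₁ v₂ h₁ hl₁ hl₂ hle
end
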